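/- arXiv:2604.27035 — 3 statements merged into one kernel-verified Lean document; each statement's English description precedes it below -/
import Mathlib

section
/- In the fixed-effects regression of the long-differenced outcome on the treatment indicator and cell intercepts, suppose weighted least squares assigns a common positive weight λ_{g,h} to all observations in cell g. Then the population coefficient on the treatment indicator equals Σ_g ω_{g,h}(λ) δ_{g,h} with ω_{g,h}(λ) = λ_{g,h} N_{g,h} n_{g,h} (1 − n_{g,h}) / Σ_{g'} λ_{g',h} N_{g',h} n_{g',h} (1 − n_{g',h}). -/
/-!
Because λ is constant on cells, numerator and denominator of the weighted FWL coefficient split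
into sums over cells. In a cell with `N` units and treated share `n`, the residual `D - n` is
`1 - n` on the `N n` treated units and `-n` on the `N (1 - n)` controls, so the cell contributes
`λ N n (1 - n)` to the denominator and `λ ((1 - n) S₁ - n S₀) = λ N n (1 - n) δ` to the numerator,
where `S₁, S₀` are the treated and control outcome totals.
-/

open Finset

lemma Finset.sum_fiberwise_dependent {ι κ M : Type*} [AddCommMonoid M] [Fintype κ] [DecidableEq κ]
    (s : Finset ι) (g : ι → κ) (f : κ → ι → M) :
    ∑ j, ∑ i ∈ s with g i = j, f j i = ∑ i ∈ s, f (g i) i := by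
  rw [← sum_fiberwise s g fun i => f (g i) i]
  exact sum_congr rfl fun j _ => sum_congr rfl fun i hi => by rw [(mem_filter.1 hi).2]

lemma Finset.sum_bool_fiberwise {ι M : Type*} [AddCommMonoid M] (s : Finset ι) (D : ι → Bool)
    (F : Bool → ι → M) :
    ∑ i ∈ s, F (D i) i = ∑ i ∈ s with D i, F true i + ∑ i ∈ s with D i = false, F false i := by
  rw [← sum_filter_add_sum_filter_not s (fun i => D i = true)]
  simp only [Bool.not_eq_true]
  congr 1 <;> exact sum_congr rfl fun i hi => by rw [(mem_filter.1 hi).2]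

lemma Finset.card_mul_sum_div_card {ι : Type*} (s : Finset ι) (f : ι → ℝ) :
    (#s : ℝ) * ((∑ i ∈ s, f i) / #s) = ∑ i ∈ s, f i :=
  mul_div_cancel_of_imp' fun h => by simp [card_eq_zero.1 (Nat.cast_eq_zero.1 h)]

section TreatedShare

variable {ι : Type*} (s : Finset ι) (D : ι → Bool)

noncomputable def treatedShare : ℝ := #{i ∈ s | D i} / #s

lemma card_mul_treatedShare : (#s : ℝ) * treatedShare s D = #{i ∈ s | D i} :=
  mul_div_cancel_of_imp' fun h => by simp [card_eq_zero.1 (Nat.cast_eq_zero.1 h)]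

lemma card_mul_one_sub_treatedShare :
    (#s : ℝ) * (1 - treatedShare s D) = #{i ∈ s | D i = false} := by
  have := card_filter_add_card_filter_not (s := s) (fun i => D i = true)
  simp only [Bool.not_eq_true] at this
  rw [mul_one_sub, card_mul_treatedShare, ← this]
  push_cast
  ring

lemma sum_indicator_sub_treatedShare_mul (Y : ι → ℝ) :
    ∑ i ∈ s, ((if D i then (1 : ℝ) else 0) - treatedShare s D) * Y i
      = #s * treatedShare s D * (1 - treatedShare s D) *
          ((∑ i ∈ s with D i, Y i) / #{i ∈ s | D i}
            - (∑ i ∈ s with D i = false, Y i) / #{i ∈ s | D i = false}) := by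
  set p := treatedShare s D
  set m₁ := (∑ i ∈ s with D i, Y i) / #{i ∈ s | D i}
  set m₀ := (∑ i ∈ s with D i = false, Y i) / #{i ∈ s | D i = false}
  rw [sum_bool_fiberwise s D fun b i => ((if b then (1 : ℝ) else 0) - p) * Y i]
  simp only [if_true, Bool.false_eq_true, if_false, ← mul_sum]
  linear_combination (p - 1) * card_mul_sum_div_card {i ∈ s | D i} Y
    + p * card_mul_sum_div_card {i ∈ s | D i = false} Y
    + (p - 1) * m₁ * card_mul_treatedShare s D + p * m₀ * card_mul_one_sub_treatedShare s D

lemma sum_indicator_sub_treatedShare_sq :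
    ∑ i ∈ s, ((if D i then (1 : ℝ) else 0) - treatedShare s D) ^ 2
      = #s * treatedShare s D * (1 - treatedShare s D) := by
  rw [sum_bool_fiberwise s D fun b _ => ((if b then (1 : ℝ) else 0) - treatedShare s D) ^ 2]
  simp only [if_true, Bool.false_eq_true, if_false, sum_const, nsmul_eq_mul,
    ← card_mul_treatedShare, ← card_mul_one_sub_treatedShare]
  ring

end TreatedShare

theorem lpdid_wls_weights_general
    {ι γ : Type*} [Fintype ι] [Fintype γ] [DecidableEq γ]
    (cell : ι → γ) (D : ι → Bool) (Y : ι → ℝ)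
    (lam : γ → ℝ)
    (Ngh Ng : γ → ℕ) (n : γ → ℝ) (δ : γ → ℝ)
    (hNgh : ∀ g, Ngh g = (univ.filter fun i => cell i = g).card)
    (hNg : ∀ g, Ng g = (univ.filter fun i => cell i = g ∧ D i = true).card)
    (hn : ∀ g, n g = (Ng g : ℝ) / (Ngh g : ℝ))
    (hδ : ∀ g, δ g =
        (∑ i ∈ univ.filter (fun i => cell i = g ∧ D i = true), Y i) / (Ng g : ℝ)
      - (∑ i ∈ univ.filter (fun i => cell i = g ∧ D i = false), Y i)
          / ((Ngh g : ℝ) - (Ng g : ℝ))) :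
    -- weighted FWL coefficient (residualization unchanged since λ is
    -- constant within each cell)
    (∑ i, lam (cell i) * ((if D i then (1 : ℝ) else 0) - n (cell i)) * Y i) /
      (∑ i, lam (cell i) * ((if D i then (1 : ℝ) else 0) - n (cell i)) ^ 2)
    =
    ∑ g, (lam g * (Ngh g : ℝ) * n g * (1 - n g) /
            ∑ g', lam g' * (Ngh g' : ℝ) * n g' * (1 - n g')) * δ g := by
  have hshare : ∀ g, n g = treatedShare (univ.filter (cell · = g)) D := fun g => by
    rw [hn, hNg, hNgh, treatedShare, filter_filter]
  have hcontrol : ∀ g, (Ngh g : ℝ) - Ng g = #{i ∈ univ.filter (cell · = g) | D i = false} :=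
    fun g => by
      rw [← card_mul_one_sub_treatedShare, mul_one_sub, card_mul_treatedShare, hNgh, hNg,
        filter_filter]
  have hcontrast : ∀ g, δ g = (∑ i ∈ univ.filter (cell · = g) with D i, Y i)
        / #{i ∈ univ.filter (cell · = g) | D i}
      - (∑ i ∈ univ.filter (cell · = g) with D i = false, Y i)
        / #{i ∈ univ.filter (cell · = g) | D i = false} := fun g => by
    rw [hδ, hcontrol, hNg, filter_filter, filter_filter]
  have hcell_num : ∀ g, ∑ i with cell i = g, lam g * ((if D i then (1 : ℝ) else 0) - n g) * Y i
      = lam g * Ngh g * n g * (1 - n g) * δ g := fun g => by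
    simp only [mul_assoc, ← mul_sum, hshare, sum_indicator_sub_treatedShare_mul, hcontrast, hNgh]
  have hcell_den : ∀ g, ∑ i with cell i = g, lam g * ((if D i then (1 : ℝ) else 0) - n g) ^ 2
      = lam g * Ngh g * n g * (1 - n g) := fun g => by
    simp only [mul_assoc, ← mul_sum, hshare, sum_indicator_sub_treatedShare_sq, hNgh]
  rw [← sum_fiberwise_dependent univ cell
      fun g i => lam g * ((if D i then (1 : ℝ) else 0) - n g) * Y i,
    ← sum_fiberwise_dependent univ cell
      fun g i => lam g * ((if D i then (1 : ℝ) else 0) - n g) ^ 2, sum_div]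
  simp only [hcell_num, hcell_den, mul_div_right_comm]

/-- WLS weighting formula: assigning a common positive weight λ_{g,h} to all
observations of cell g, the population coefficient on the treatment indicator
in the cell-fixed-effects regression equals the λ-reweighted variance-weighted
average of the within-cell contrasts δ_{g,h}. -/
theorem lpdid_wls_weights
    {ι γ : Type*} [Fintype ι] [Fintype γ] [DecidableEq γ]
    (cell : ι → γ) (D : ι → Bool) (Y : ι → ℝ)
    (lam : γ → ℝ) (hlam : ∀ g, 0 < lam g)   -- common positive cell weights
    (Ngh Ng : γ → ℕ) (n : γ → ℝ) (δ : γ → ℝ)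
    (hNgh : ∀ g, Ngh g = (univ.filter fun i => cell i = g).card)
    (hNg : ∀ g, Ng g = (univ.filter fun i => cell i = g ∧ D i = true).card)
    (hn : ∀ g, n g = (Ng g : ℝ) / (Ngh g : ℝ))
    (htreated : ∀ g, 0 < Ng g) (hcontrol : ∀ g, Ng g < Ngh g)
    (hδ : ∀ g, δ g =
        (∑ i ∈ univ.filter (fun i => cell i = g ∧ D i = true), Y i) / (Ng g : ℝ)
      - (∑ i ∈ univ.filter (fun i => cell i = g ∧ D i = false), Y i)
          / ((Ngh g : ℝ) - (Ng g : ℝ))) :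
    -- weighted FWL coefficient (residualization unchanged since λ is
    -- constant within each cell)
    (∑ i, lam (cell i) * ((if D i then (1 : ℝ) else 0) - n (cell i)) * Y i) /
      (∑ i, lam (cell i) * ((if D i then (1 : ℝ) else 0) - n (cell i)) ^ 2)
    =
    ∑ g, (lam g * (Ngh g : ℝ) * n g * (1 - n g) /
            ∑ g', lam g' * (Ngh g' : ℝ) * n g' * (1 - n g')) * δ g :=
  lpdid_wls_weights_general cell D Y lam Ngh Ng n δ hNgh hNg hn hδ
end

section
/- Under local conditional parallel trends and overlap (0 < π(X) < 1 a.s.), the treated-entry average effect θ_h = E[Δ(h;1) − Δ(h;0) | D = 1] admits the inverse-probability-weighting representation θ_h = E[D Δ(h)] / E[D] − E[(1 − D) ω(X) Δ(h)] / E[(1 − D) ω(X)], where ω(X) = π(X)/(1 − π(X)). -/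
open MeasureTheory

/-- Auxiliary weighting identity: if `w = π/(1-π)` with `π = E[D|m]`, `D ∈ {0,1}`,
`E[Z|mm] = E[Z|m]` a.e. for `m ≤ mm`, then `E[D Z] = E[(1-D) w Z]`. -/
lemma lpdid_aux {Ω : Type*} {m mm : MeasurableSpace Ω} [m0 : MeasurableSpace Ω]
    (hm : m ≤ m0) (hmm : mm ≤ m0) (hm_mm : m ≤ mm)
    (μ : Measure Ω) [IsProbabilityMeasure μ]
    (D piX w Z : Ω → ℝ)
    (hD01 : ∀ ω, D ω = 0 ∨ D ω = 1) (hD : Measurable D)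
    (hDmm : Measurable[mm] D)
    (hwm : StronglyMeasurable[m] w)
    (hpi : μ[D|m] =ᵐ[μ] piX)
    (hov : ∀ᵐ ω ∂μ, piX ω < 1)
    (hwpi : ∀ ω, w ω = piX ω / (1 - piX ω))
    (hZ : Integrable Z μ)
    (hZc : μ[Z|mm] =ᵐ[μ] μ[Z|m])
    (hwZ : Integrable (fun ω => w ω * ((1 - D ω) * Z ω)) μ) :
    ∫ ω, D ω * Z ω ∂μ = ∫ ω, w ω * ((1 - D ω) * Z ω) ∂μ := by
  haveI : SigmaFinite (μ.trim hm) := by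
    haveI := isFiniteMeasure_trim (μ := μ) hm; infer_instance
  haveI : SigmaFinite (μ.trim hmm) := by
    haveI := isFiniteMeasure_trim (μ := μ) hmm; infer_instance
  have hDb : ∀ ω, ‖D ω‖ ≤ 1 := by
    intro ω; rcases hD01 ω with h | h <;> simp [h]
  have h1Db : ∀ ω, ‖1 - D ω‖ ≤ 1 := by
    intro ω; rcases hD01 ω with h | h <;> simp [h]
  have h1Dmeas : Measurable (fun ω => 1 - D ω) := measurable_const.sub hD
  have hintD : Integrable D μ := by
    have := (integrable_const (μ := μ) (1 : ℝ)).bdd_mul hD.aestronglyMeasurable (Filter.Eventually.of_forall hDb)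
    simpa using this
  have hint1D : Integrable (fun ω => 1 - D ω) μ := (integrable_const 1).sub hintD
  have h1Dmm : StronglyMeasurable[mm] (fun ω => 1 - D ω) :=
    (measurable_const.sub hDmm).stronglyMeasurable
  have hDmmS : StronglyMeasurable[mm] D := hDmm.stronglyMeasurable
  have h1Dcond : μ[(fun ω => 1 - D ω)|m] =ᵐ[μ] fun ω => 1 - piX ω := by
    have h : μ[(fun ω => 1 - D ω)|m]
        =ᵐ[μ] μ[(fun _ : Ω => (1 : ℝ))|m] - μ[D|m] :=
      condExp_sub (m := m) (μ := μ) (integrable_const (1 : ℝ)) hintD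
    have hc : μ[(fun _ : Ω => (1 : ℝ))|m] = fun _ => (1 : ℝ) := condExp_const hm 1
    filter_upwards [h, hpi] with ω hω hπ
    have h1 : (μ[(fun _ : Ω => (1 : ℝ))|m]) ω = 1 := by rw [hc]
    have h2 : (μ[(fun _ : Ω => (1 : ℝ))|m] - μ[D|m]) ω
        = (μ[(fun _ : Ω => (1 : ℝ))|m]) ω - (μ[D|m]) ω := rfl
    rw [hω, h2, h1, hπ]
  set g : Ω → ℝ := μ[Z|m] with hg_def
  have hgm : StronglyMeasurable[m] g := stronglyMeasurable_condExp
  have hgint : Integrable g μ := integrable_condExp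
  have hDZ : Integrable (fun ω => D ω * Z ω) μ :=
    hZ.bdd_mul hD.aestronglyMeasurable (Filter.Eventually.of_forall hDb)
  have h1DZ : Integrable (fun ω => (1 - D ω) * Z ω) μ :=
    hZ.bdd_mul h1Dmeas.aestronglyMeasurable (Filter.Eventually.of_forall h1Db)
  have hgD : Integrable (fun ω => g ω * D ω) μ := by
    have := hgint.bdd_mul hD.aestronglyMeasurable (Filter.Eventually.of_forall hDb)
    exact this.congr (Filter.Eventually.of_forall fun ω => mul_comm _ _)
  have hg1D : Integrable (fun ω => g ω * (1 - D ω)) μ := by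
    have := hgint.bdd_mul h1Dmeas.aestronglyMeasurable (Filter.Eventually.of_forall h1Db)
    exact this.congr (Filter.Eventually.of_forall fun ω => mul_comm _ _)
  -- μ[D*Z|m] = g * piX  a.e.
  have hDZcond : μ[(fun ω => D ω * Z ω)|m] =ᵐ[μ] fun ω => g ω * piX ω := by
    have t1 : μ[(fun ω => D ω * Z ω)|mm] =ᵐ[μ] fun ω => D ω * g ω := by
      have h := condExp_mul_of_stronglyMeasurable_left (μ := μ) hDmmS
        (show Integrable (D * Z) μ from hDZ) hZ
      refine h.trans ?_
      filter_upwards [hZc] with ω hω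
      simp only [Pi.mul_apply]
      rw [hω]
    have t2 : μ[μ[(fun ω => D ω * Z ω)|mm]|m] =ᵐ[μ] μ[(fun ω => D ω * g ω)|m] :=
      condExp_congr_ae t1
    have t3 : μ[(fun ω => D ω * Z ω)|m]
        =ᵐ[μ] μ[μ[(fun ω => D ω * Z ω)|mm]|m] :=
      (condExp_condExp_of_le hm_mm hmm).symm
    have heq : (fun ω => D ω * g ω) = fun ω => g ω * D ω :=
      funext fun ω => mul_comm _ _
    have t4 : μ[(fun ω => g ω * D ω)|m] =ᵐ[μ] fun ω => g ω * (μ[D|m]) ω :=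
      condExp_mul_of_stronglyMeasurable_left (μ := μ) hgm
        (show Integrable (g * D) μ from hgD) hintD
    refine t3.trans (t2.trans ?_)
    rw [heq]
    refine t4.trans ?_
    filter_upwards [hpi] with ω hω
    rw [hω]
  -- μ[(1-D)*Z|m] = g * (1 - piX)  a.e.
  have h1DZcond : μ[(fun ω => (1 - D ω) * Z ω)|m]
      =ᵐ[μ] fun ω => g ω * (1 - piX ω) := by
    have t1 : μ[(fun ω => (1 - D ω) * Z ω)|mm] =ᵐ[μ] fun ω => (1 - D ω) * g ω := by
      have h := condExp_mul_of_stronglyMeasurable_left (μ := μ) h1Dmm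
        (show Integrable ((fun ω => 1 - D ω) * Z) μ from h1DZ) hZ
      refine h.trans ?_
      filter_upwards [hZc] with ω hω
      simp only [Pi.mul_apply]
      rw [hω]
    have t2 : μ[μ[(fun ω => (1 - D ω) * Z ω)|mm]|m]
        =ᵐ[μ] μ[(fun ω => (1 - D ω) * g ω)|m] := condExp_congr_ae t1
    have t3 : μ[(fun ω => (1 - D ω) * Z ω)|m]
        =ᵐ[μ] μ[μ[(fun ω => (1 - D ω) * Z ω)|mm]|m] :=
      (condExp_condExp_of_le hm_mm hmm).symm
    have heq : (fun ω => (1 - D ω) * g ω) = fun ω => g ω * (1 - D ω) :=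
      funext fun ω => mul_comm _ _
    have t4 : μ[(fun ω => g ω * (1 - D ω))|m]
        =ᵐ[μ] fun ω => g ω * (μ[(fun ω => 1 - D ω)|m]) ω :=
      condExp_mul_of_stronglyMeasurable_left (μ := μ) hgm
        (show Integrable (g * fun ω => 1 - D ω) μ from hg1D) hint1D
    refine t3.trans (t2.trans ?_)
    rw [heq]
    refine t4.trans ?_
    filter_upwards [h1Dcond] with ω hω
    rw [hω]
  -- pull out w
  have hwZcond : μ[(fun ω => w ω * ((1 - D ω) * Z ω))|m]
      =ᵐ[μ] fun ω => w ω * (g ω * (1 - piX ω)) := by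
    have h := condExp_mul_of_stronglyMeasurable_left (μ := μ) hwm
      (show Integrable (w * fun ω => (1 - D ω) * Z ω) μ from hwZ) h1DZ
    refine h.trans ?_
    filter_upwards [h1DZcond] with ω hω
    simp only [Pi.mul_apply]
    rw [hω]
  calc ∫ ω, D ω * Z ω ∂μ
      = ∫ ω, (μ[(fun ω => D ω * Z ω)|m]) ω ∂μ := (integral_condExp hm).symm
    _ = ∫ ω, g ω * piX ω ∂μ := integral_congr_ae hDZcond
    _ = ∫ ω, w ω * (g ω * (1 - piX ω)) ∂μ := by
        refine integral_congr_ae ?_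
        filter_upwards [hov] with ω hω
        have h1 : (1 : ℝ) - piX ω ≠ 0 := by linarith
        rw [hwpi ω]
        field_simp
    _ = ∫ ω, (μ[(fun ω => w ω * ((1 - D ω) * Z ω))|m]) ω ∂μ :=
        (integral_congr_ae hwZcond).symm
    _ = ∫ ω, w ω * ((1 - D ω) * Z ω) ∂μ := integral_condExp hm

/-- Local IPW representation: under local conditional parallel trends and
overlap, θ_h = E[Δ(h;1) − Δ(h;0) | D = 1] equals
E[DΔ(h)]/E[D] − E[(1−D)ω(X)Δ(h)]/E[(1−D)ω(X)], where ω(X) = π(X)/(1−π(X)). -/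
theorem lpdid_ipw_representation
    {Ω β : Type*} [MeasurableSpace Ω] [MeasurableSpace β]
    (μ : Measure Ω) [IsProbabilityMeasure μ]
    (D : Ω → ℝ) (hD01 : ∀ ω, D ω = 0 ∨ D ω = 1) (hD : Measurable D)
    (X : Ω → β) (hX : Measurable X)
    (Δ1 Δ0 Δobs : Ω → ℝ)
    (hΔobs : ∀ ω, Δobs ω = D ω * Δ1 ω + (1 - D ω) * Δ0 ω)
    (hint1 : Integrable Δ1 μ) (hint0 : Integrable Δ0 μ)
    (hpos : 0 < μ {ω | D ω = 1})
    (piX : Ω → ℝ)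
    -- π(X) = P(D = 1 | X), σ(X)-measurable
    (hpimeas : Measurable[MeasurableSpace.comap X inferInstance] piX)
    (hpi : μ[D | MeasurableSpace.comap X inferInstance] =ᵐ[μ] piX)
    -- overlap
    (hoverlap : ∀ᵐ ω ∂μ, 0 < piX ω ∧ piX ω < 1)
    -- integrability of the weighted terms
    (hintw : Integrable (fun ω => (1 - D ω) * (piX ω / (1 - piX ω)) * Δobs ω) μ)
    (hintw1 : Integrable (fun ω => (1 - D ω) * (piX ω / (1 - piX ω))) μ)
    -- local conditional parallel trends: E[Δ(h;0) | D, X] = E[Δ(h;0) | X] a.s.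
    (hCPT : μ[Δ0 | MeasurableSpace.comap (fun ω => (D ω, X ω)) inferInstance]
        =ᵐ[μ] μ[Δ0 | MeasurableSpace.comap X inferInstance]) :
    (∫ ω in {ω | D ω = 1}, (Δ1 ω - Δ0 ω) ∂μ) / (μ {ω | D ω = 1}).toReal
      = (∫ ω, D ω * Δobs ω ∂μ) / (∫ ω, D ω ∂μ)
        - (∫ ω, (1 - D ω) * (piX ω / (1 - piX ω)) * Δobs ω ∂μ)
          / (∫ ω, (1 - D ω) * (piX ω / (1 - piX ω)) ∂μ) := by
  classical
  have hm : MeasurableSpace.comap X inferInstance ≤ _ := hX.comap_le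
  have hmm : MeasurableSpace.comap (fun ω => (D ω, X ω)) inferInstance ≤ _ :=
    (hD.prodMk hX).comap_le
  have hm_mm : MeasurableSpace.comap X inferInstance
      ≤ MeasurableSpace.comap (fun ω => (D ω, X ω)) inferInstance := by
    have hXc : X = Prod.snd ∘ (fun ω => (D ω, X ω)) := rfl
    conv_lhs => rw [hXc]
    rw [← MeasurableSpace.comap_comp]
    exact MeasurableSpace.comap_mono measurable_snd.comap_le
  have hDmm : Measurable[MeasurableSpace.comap (fun ω => (D ω, X ω)) inferInstance] D :=
    measurable_fst.comp (measurable_iff_comap_le.mpr le_rfl)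
  have hwm : StronglyMeasurable[MeasurableSpace.comap X inferInstance]
      (fun ω => piX ω / (1 - piX ω)) :=
    (hpimeas.div (measurable_const.sub hpimeas)).stronglyMeasurable
  have hov : ∀ᵐ ω ∂μ, piX ω < 1 := by filter_upwards [hoverlap] with ω hω; exact hω.2
  have hDb : ∀ ω, ‖D ω‖ ≤ 1 := by
    intro ω; rcases hD01 ω with h | h <;> simp [h]
  have hDΔ1 : Integrable (fun ω => D ω * Δ1 ω) μ :=
    hint1.bdd_mul hD.aestronglyMeasurable (Filter.Eventually.of_forall hDb)
  have hDΔ0 : Integrable (fun ω => D ω * Δ0 ω) μ :=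
    hint0.bdd_mul hD.aestronglyMeasurable (Filter.Eventually.of_forall hDb)
  -- rewrite the observed-outcome integrands
  have hobs1 : (fun ω => D ω * Δobs ω) = fun ω => D ω * Δ1 ω := by
    funext ω; rcases hD01 ω with h | h <;> rw [hΔobs, h] <;> ring
  have hobs0 : (fun ω => (1 - D ω) * (piX ω / (1 - piX ω)) * Δobs ω)
      = fun ω => (piX ω / (1 - piX ω)) * ((1 - D ω) * Δ0 ω) := by
    funext ω; rcases hD01 ω with h | h <;> rw [hΔobs, h] <;> ring
  have hobsw : (fun ω => (1 - D ω) * (piX ω / (1 - piX ω)))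
      = fun ω => (piX ω / (1 - piX ω)) * ((1 - D ω) * (1 : ℝ)) := by
    funext ω; ring
  -- apply the key identity to Z = Δ0 and Z = 1
  have keyΔ0 : ∫ ω, D ω * Δ0 ω ∂μ
      = ∫ ω, (piX ω / (1 - piX ω)) * ((1 - D ω) * Δ0 ω) ∂μ := by
    refine lpdid_aux hm hmm hm_mm μ D piX _ Δ0 hD01 hD hDmm hwm hpi hov
      (fun ω => rfl) hint0 hCPT ?_
    rw [← hobs0]; exact hintw
  have key1 : ∫ ω, D ω * (1 : ℝ) ∂μ
      = ∫ ω, (piX ω / (1 - piX ω)) * ((1 - D ω) * (1 : ℝ)) ∂μ := by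
    refine lpdid_aux hm hmm hm_mm μ D piX _ (fun _ => (1 : ℝ)) hD01 hD hDmm hwm hpi hov
      (fun ω => rfl) (integrable_const 1) ?_ ?_
    · rw [condExp_const hmm, condExp_const hm]
    · rw [← hobsw]; exact hintw1
  -- ∫ D = μ{D=1}
  have hsmeas : MeasurableSet {ω | D ω = 1} := hD (measurableSet_singleton 1)
  have hDind : D = Set.indicator {ω | D ω = 1} (fun _ => (1 : ℝ)) := by
    funext ω
    rcases hD01 ω with h | h
    · rw [Set.indicator_of_notMem] <;> simp [h]
    · rw [Set.indicator_of_mem] <;> simp [h]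
  have hintDval : ∫ ω, D ω ∂μ = (μ {ω | D ω = 1}).toReal := by
    rw [hDind]
    simpa [Measure.real, Pi.one_def] using integral_indicator_one (μ := μ) hsmeas
  -- LHS as difference of integrals
  have hset : ∫ ω in {ω | D ω = 1}, (Δ1 ω - Δ0 ω) ∂μ
      = ∫ ω, D ω * Δ1 ω ∂μ - ∫ ω, D ω * Δ0 ω ∂μ := by
    have h1 : ∫ ω in {ω | D ω = 1}, (Δ1 ω - Δ0 ω) ∂μ
        = ∫ ω, Set.indicator {ω | D ω = 1} (fun ω => Δ1 ω - Δ0 ω) ω ∂μ :=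
      (integral_indicator hsmeas).symm
    have h2 : Set.indicator {ω | D ω = 1} (fun ω => Δ1 ω - Δ0 ω)
        = fun ω => D ω * Δ1 ω - D ω * Δ0 ω := by
      funext ω
      rcases hD01 ω with h | h
      · rw [Set.indicator_of_notMem] <;> simp [h]
      · rw [Set.indicator_of_mem] <;> simp [h]
    rw [h1, h2, integral_sub hDΔ1 hDΔ0]
  -- finish
  have hD1 : ∫ ω, D ω * (1 : ℝ) ∂μ = (μ {ω | D ω = 1}).toReal := by
    simpa using hintDval
  rw [hset, hobs1, hobs0, hobsw, ← keyΔ0, ← key1, hintDval, hD1, sub_div]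
end

section
/- Define the doubly robust functional θ^{DR}(m, ω) = E[D(Δ(h) − m(X))]/E[D] − E[(1−D) ω(X) (Δ(h) − m(X))]/E[(1−D) ω(X)]. If ω(X) = π(X)/(1 − π(X)) with π(X) = P(D=1|X) the true propensity score (and 0 < π(X) < 1 a.s.), then for any integrable σ(X)-measurable function m, θ^{DR}(m, ω) = θ_h: the regression term cancels exactly between treated and weighted-control components, yielding the IPW representation. -/
open MeasureTheory

private lemma integral_mul_condexp' {Ω : Type*} {m0 : MeasurableSpace Ω}
    (μ : Measure Ω) [IsProbabilityMeasure μ]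
    {G : MeasurableSpace Ω} (hG : G ≤ m0)
    {a f : Ω → ℝ} (ha : StronglyMeasurable[G] a)
    (haf : Integrable (fun ω => a ω * f ω) μ) (hf : Integrable f μ) :
    ∫ ω, a ω * f ω ∂μ = ∫ ω, a ω * (μ[f|G]) ω ∂μ := by
  have h : μ[a * f|G] =ᵐ[μ] a * μ[f|G] := condExp_mul_of_stronglyMeasurable_left ha haf hf
  calc ∫ ω, a ω * f ω ∂μ = ∫ ω, (μ[a * f|G]) ω ∂μ :=
      (integral_condExp (μ := μ) (f := a * f) hG).symm
    _ = ∫ ω, (a * μ[f|G]) ω ∂μ := integral_congr_ae h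
    _ = ∫ ω, a ω * (μ[f|G]) ω ∂μ := rfl

/-- Double robustness, correct propensity-score case: if ω(X) = π(X)/(1−π(X))
with π(X) = P(D = 1 | X) the true propensity score and 0 < π(X) < 1 a.s., then
the DR functional identifies θ_h = E[Δ(h;1) − Δ(h;0) | D = 1] for ANY
integrable σ(X)-measurable regression function m. -/
theorem lpdid_dr_correct_propensity
    {Ω β : Type*} [MeasurableSpace Ω] [MeasurableSpace β]
    (μ : Measure Ω) [IsProbabilityMeasure μ]
    (D : Ω → ℝ) (hD01 : ∀ ω, D ω = 0 ∨ D ω = 1) (hD : Measurable D)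
    (X : Ω → β) (hX : Measurable X)
    (Δ1 Δ0 Δobs : Ω → ℝ)
    (hΔobs : ∀ ω, Δobs ω = D ω * Δ1 ω + (1 - D ω) * Δ0 ω)
    (hint1 : Integrable Δ1 μ) (hint0 : Integrable Δ0 μ)
    (hpos : 0 < μ {ω | D ω = 1})
    (piX : Ω → ℝ)
    -- true propensity score with overlap
    (hpimeas : Measurable[MeasurableSpace.comap X inferInstance] piX)
    (hpi : μ[D | MeasurableSpace.comap X inferInstance] =ᵐ[μ] piX)
    (hoverlap : ∀ᵐ ω ∂μ, 0 < piX ω ∧ piX ω < 1)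
    -- local conditional parallel trends
    (hCPT : μ[Δ0 | MeasurableSpace.comap (fun ω => (D ω, X ω)) inferInstance]
        =ᵐ[μ] μ[Δ0 | MeasurableSpace.comap X inferInstance])
    -- an arbitrary integrable σ(X)-measurable regression function m
    (m : Ω → ℝ)
    (hmmeas : Measurable[MeasurableSpace.comap X inferInstance] m)
    (hmint : Integrable m μ)
    (hintDm : Integrable (fun ω => D ω * (Δobs ω - m ω)) μ)
    (hintw : Integrable
      (fun ω => (1 - D ω) * (piX ω / (1 - piX ω)) * (Δobs ω - m ω)) μ)
    (hintwm : Integrable (fun ω => (1 - D ω) * (piX ω / (1 - piX ω)) * m ω) μ)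
    (hintwΔ : Integrable (fun ω => (1 - D ω) * (piX ω / (1 - piX ω)) * Δobs ω) μ)
    (hintw1 : Integrable (fun ω => (1 - D ω) * (piX ω / (1 - piX ω))) μ) :
    (∫ ω, D ω * (Δobs ω - m ω) ∂μ) / (∫ ω, D ω ∂μ)
      - (∫ ω, (1 - D ω) * (piX ω / (1 - piX ω)) * (Δobs ω - m ω) ∂μ)
          / (∫ ω, (1 - D ω) * (piX ω / (1 - piX ω)) ∂μ)
    = (∫ ω in {ω | D ω = 1}, (Δ1 ω - Δ0 ω) ∂μ) / (μ {ω | D ω = 1}).toReal := by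
  classical
  -- the RHS
  have hs : MeasurableSet ({ω | D ω = 1} : Set Ω) := hD (measurableSet_singleton 1)
  have hRHSnum : ∫ ω in ({ω | D ω = 1} : Set Ω), (Δ1 ω - Δ0 ω) ∂μ
      = ∫ ω, D ω * (Δ1 ω - Δ0 ω) ∂μ := by
    rw [← integral_indicator hs]
    refine integral_congr_ae (Filter.Eventually.of_forall fun ω => ?_)
    rcases hD01 ω with h | h
    · have hmem : ω ∉ ({ω | D ω = 1} : Set Ω) := by simp [h]
      simp [Set.indicator_of_notMem hmem, h]
    · have hmem : ω ∈ ({ω | D ω = 1} : Set Ω) := by simp [h]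
      simp [Set.indicator_of_mem hmem, h]
  have hDmeasure : ∫ ω, D ω ∂μ = (μ {ω | D ω = 1}).toReal := by
    have e : D = ({ω | D ω = 1} : Set Ω).indicator (fun _ => (1:ℝ)) := by
      funext ω
      rcases hD01 ω with h | h
      · have hmem : ω ∉ ({ω | D ω = 1} : Set Ω) := by simp [h]
        simp [Set.indicator_of_notMem hmem, h]
      · have hmem : ω ∈ ({ω | D ω = 1} : Set Ω) := by simp [h]
        simp [Set.indicator_of_mem hmem, h]
    rw [e, integral_indicator hs]
    simp
    rfl
  have hG : MeasurableSpace.comap X inferInstance ≤ ‹MeasurableSpace Ω› := hX.comap_le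
  have hG' : MeasurableSpace.comap (fun ω => (D ω, X ω)) inferInstance
      ≤ ‹MeasurableSpace Ω› := (hD.prodMk hX).comap_le
  have hGG' : MeasurableSpace.comap X inferInstance
      ≤ MeasurableSpace.comap (fun ω => (D ω, X ω)) inferInstance := by
    have hXeq : X = Prod.snd ∘ (fun ω => (D ω, X ω)) := rfl
    rw [hXeq, ← MeasurableSpace.comap_comp]
    exact MeasurableSpace.comap_mono measurable_snd.comap_le
  set G := MeasurableSpace.comap X inferInstance with hGdef
  set G' := MeasurableSpace.comap (fun ω => (D ω, X ω)) inferInstance with hG'def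
  set w : Ω → ℝ := fun ω => piX ω / (1 - piX ω) with hwdef
  have hw : StronglyMeasurable[G] w :=
    (hpimeas.div (measurable_const.sub hpimeas)).stronglyMeasurable
  -- basic boundedness / integrability
  have hDbd : ∀ ω, ‖D ω‖ ≤ 1 := by
    intro ω; rcases hD01 ω with h | h <;> simp [h]
  have h1Dbd : ∀ ω, ‖1 - D ω‖ ≤ 1 := by
    intro ω; rcases hD01 ω with h | h <;> simp [h]
  have hDint : Integrable D μ :=
    (integrable_const (1 : ℝ)).mono' hD.aestronglyMeasurable (Filter.Eventually.of_forall hDbd)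
  have h1Dint : Integrable (fun ω => 1 - D ω) μ := (integrable_const 1).sub hDint
  have hDmul : ∀ {f : Ω → ℝ}, Integrable f μ → Integrable (fun ω => D ω * f ω) μ :=
    fun hf => hf.bdd_mul hD.aestronglyMeasurable (Filter.Eventually.of_forall hDbd)
  have h1Dmul : ∀ {f : Ω → ℝ}, Integrable f μ → Integrable (fun ω => (1 - D ω) * f ω) μ :=
    fun hf => hf.bdd_mul (measurable_const.sub hD).aestronglyMeasurable (Filter.Eventually.of_forall h1Dbd)
  -- conditional expectation of 1 - D
  have h1Dcond : μ[fun ω => 1 - D ω|G] =ᵐ[μ] fun ω => 1 - piX ω := by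
    have h0 : (fun ω => 1 - D ω) = (fun _ => (1:ℝ)) - D := rfl
    rw [h0]
    refine (condExp_sub (integrable_const 1) hDint _).trans ?_
    rw [condExp_const hG]
    filter_upwards [hpi] with ω hω
    simp [hω]
  -- D  is G'-measurable
  have hDG' : StronglyMeasurable[G'] D := by
    have : Measurable[G'] D := by
      exact measurable_fst.comp (comap_measurable (fun ω => (D ω, X ω)))
    exact this.stronglyMeasurable
  have h1DG' : StronglyMeasurable[G'] (fun ω => 1 - D ω) :=
    (stronglyMeasurable_const.sub hDG')
  set g0 : Ω → ℝ := μ[Δ0|G] with hg0def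
  have hg0meas : StronglyMeasurable[G] g0 := stronglyMeasurable_condExp
  have hg0int : Integrable g0 μ := integrable_condExp
  -- key pointwise facts
  have hDΔobs_eq : ∀ ω, D ω * Δobs ω = D ω * Δ1 ω := by
    intro ω; rcases hD01 ω with h | h <;> simp [hΔobs ω, h]
  have h1DΔobs_eq : ∀ ω, (1 - D ω) * w ω * Δobs ω = w ω * ((1 - D ω) * Δ0 ω) := by
    intro ω; rcases hD01 ω with h | h <;> simp [hΔobs ω, h] <;> ring
  -- ∫ D = ∫ piX
  have hintpi : ∫ ω, D ω ∂μ = ∫ ω, piX ω ∂μ := by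
    rw [← integral_condExp hG (f := D)]
    exact integral_congr_ae hpi
  -- (i) weighted control denominator equals ∫ D
  have hCw : ∫ ω, (1 - D ω) * w ω ∂μ = ∫ ω, D ω ∂μ := by
    have e1 : (fun ω => (1 - D ω) * w ω) = fun ω => w ω * (1 - D ω) := by
      funext ω; ring
    rw [e1, integral_mul_condexp' μ hG hw (by rw [← e1]; exact hintw1) h1Dint, hintpi]
    refine integral_congr_ae ?_
    filter_upwards [h1Dcond, hoverlap] with ω h1 ⟨hp0, hp1⟩
    rw [h1]
    have hne : 1 - piX ω ≠ 0 := by linarith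
    show piX ω / (1 - piX ω) * (1 - piX ω) = piX ω
    rw [div_mul_cancel₀ _ hne]
  -- (ii) the m-terms cancel
  have hwm : ∫ ω, (1 - D ω) * w ω * m ω ∂μ = ∫ ω, D ω * m ω ∂μ := by
    have e1 : (fun ω => (1 - D ω) * w ω * m ω) = fun ω => (w ω * m ω) * (1 - D ω) := by
      funext ω; ring
    have e2 : (fun ω => D ω * m ω) = fun ω => m ω * D ω := by funext ω; ring
    rw [e1, integral_mul_condexp' μ hG (a := fun ω => w ω * m ω)
        (f := fun ω => 1 - D ω) (hw.mul hmmeas.stronglyMeasurable)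
        (by rw [← e1]; exact hintwm) h1Dint,
      e2, integral_mul_condexp' μ hG (a := m) (f := D) hmmeas.stronglyMeasurable
        (by rw [← e2]; exact hDmul hmint) hDint]
    refine integral_congr_ae ?_
    filter_upwards [h1Dcond, hpi, hoverlap] with ω h1 h2 ⟨hp0, hp1⟩
    rw [h1, h2]
    have hne : 1 - piX ω ≠ 0 := by linarith
    rw [show w ω = piX ω / (1 - piX ω) from rfl]
    field_simp [hwdef]
  -- conditional expectations via the tower property
  have htower : ∀ (a : Ω → ℝ), StronglyMeasurable[G'] a → (∀ ω, ‖a ω‖ ≤ 1) →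
      AEStronglyMeasurable[(fun (m0 : MeasurableSpace Ω) (_ : Measure[m0] Ω) => m0) _ μ] a μ →
      μ[fun ω => a ω * Δ0 ω|G] =ᵐ[μ] fun ω => g0 ω * (μ[a|G]) ω := by
    intro a haG' habd hame
    have haint : Integrable a μ :=
      (integrable_const (1 : ℝ)).mono' hame (Filter.Eventually.of_forall habd)
    have haΔint : Integrable (fun ω => a ω * Δ0 ω) μ := hint0.bdd_mul hame (Filter.Eventually.of_forall habd)
    have t1 : μ[fun ω => a ω * Δ0 ω|G] =ᵐ[μ] μ[μ[fun ω => a ω * Δ0 ω|G']|G] :=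
      (condExp_condExp_of_le hGG' hG').symm
    have t2 : μ[fun ω => a ω * Δ0 ω|G'] =ᵐ[μ] fun ω => a ω * g0 ω := by
      refine (condExp_mul_of_stronglyMeasurable_left haG' haΔint hint0).trans ?_
      filter_upwards [hCPT] with ω hω
      simp only [Pi.mul_apply]
      rw [hω]
    have t3 : μ[fun ω => a ω * g0 ω|G] =ᵐ[μ] fun ω => g0 ω * (μ[a|G]) ω := by
      have e : (fun ω => a ω * g0 ω) = g0 * a := by
        funext ω; exact mul_comm _ _
      rw [e]
      have hfg : Integrable (g0 * a) μ :=
        ((hg0int.bdd_mul hame (Filter.Eventually.of_forall habd))).congr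
          (Filter.Eventually.of_forall fun ω => mul_comm (a ω) (g0 ω))
      exact condExp_mul_of_stronglyMeasurable_left hg0meas hfg haint
    exact t1.trans ((condExp_congr_ae t2).trans t3)
  -- (iii) the Δobs terms
  have hwΔ : ∫ ω, (1 - D ω) * w ω * Δobs ω ∂μ = ∫ ω, D ω * Δ0 ω ∂μ := by
    have e1 : (fun ω => (1 - D ω) * w ω * Δobs ω)
        = fun ω => w ω * ((1 - D ω) * Δ0 ω) := by funext ω; exact h1DΔobs_eq ω
    have hint10 : Integrable (fun ω => (1 - D ω) * Δ0 ω) μ := h1Dmul hint0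
    rw [e1, integral_mul_condexp' μ hG hw (by rw [← e1]; exact hintwΔ) hint10]
    have hc1 := htower (fun ω => 1 - D ω) h1DG' h1Dbd
      (measurable_const.sub hD).aestronglyMeasurable
    have hc2 := htower D hDG' hDbd hD.aestronglyMeasurable
    have key : ∫ ω, w ω * (μ[fun ω => (1 - D ω) * Δ0 ω|G]) ω ∂μ
        = ∫ ω, (μ[fun ω => D ω * Δ0 ω|G]) ω ∂μ := by
      refine integral_congr_ae ?_
      filter_upwards [hc1, hc2, h1Dcond, hpi, hoverlap] with ω k1 k2 k3 k4 ⟨hp0, hp1⟩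
      rw [k1, k2, k3, k4]
      have hne : 1 - piX ω ≠ 0 := by linarith
      rw [show w ω = piX ω / (1 - piX ω) from rfl]
      field_simp
    rw [key, integral_condExp hG]
  -- split the two numerators
  have hintDΔobs : Integrable (fun ω => D ω * Δobs ω) μ := by
    refine (hDmul hint1).congr (Filter.Eventually.of_forall fun ω => (hDΔobs_eq ω).symm)
  have hintDm' : Integrable (fun ω => D ω * m ω) μ := hDmul hmint
  have hA : ∫ ω, D ω * (Δobs ω - m ω) ∂μ
      = (∫ ω, D ω * Δobs ω ∂μ) - ∫ ω, D ω * m ω ∂μ := by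
    rw [← integral_sub hintDΔobs hintDm']
    refine integral_congr_ae (Filter.Eventually.of_forall fun ω => ?_)
    ring
  have hintwΔ' : Integrable (fun ω => (1 - D ω) * w ω * Δobs ω) μ := hintwΔ
  have hB : ∫ ω, (1 - D ω) * w ω * (Δobs ω - m ω) ∂μ
      = (∫ ω, (1 - D ω) * w ω * Δobs ω ∂μ) - ∫ ω, (1 - D ω) * w ω * m ω ∂μ := by
    rw [← integral_sub hintwΔ' hintwm]
    refine integral_congr_ae (Filter.Eventually.of_forall fun ω => ?_)
    ring
  have hsub : ∫ ω, D ω * (Δ1 ω - Δ0 ω) ∂μ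
      = (∫ ω, D ω * Δ1 ω ∂μ) - ∫ ω, D ω * Δ0 ω ∂μ := by
    rw [← integral_sub (hDmul hint1) (hDmul hint0)]
    refine integral_congr_ae (Filter.Eventually.of_forall fun ω => ?_)
    ring
  have hDΔobs_int_eq : ∫ ω, D ω * Δobs ω ∂μ = ∫ ω, D ω * Δ1 ω ∂μ :=
    integral_congr_ae (Filter.Eventually.of_forall hDΔobs_eq)
  -- finish
  rw [hA, hB, hCw, hwm, hwΔ, hDΔobs_int_eq, div_sub_div_same, hRHSnum, hsub, hDmeasure]
  ring_nf
end
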